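/- arXiv:1001.4255 — 6 statements merged into one kernel-verified Lean document; each statement's English description precedes it below -/
import Mathlib

section
/- Let B be a set of Boolean operators all of whose associated Boolean functions are false-reproducing, i.e., f(false,…,false) = false. Let I be the interpretation with domain Δ = {w} a single point, A^I = ∅ for every atomic concept A, and R^I = {(w,w)} for every role R. Then C^I = ∅ for every concept C over B. -/
/-- A Boolean operator: an arity `n` together with a Boolean function `Bool^n → Bool`. -/
abbrev BOp : Type := Σ n : ℕ, (Fin n → Bool) → Bool

/-- Concepts over the full signature: atomic concepts and roles are indexed by `ℕ`;
`app o cs` applies the Boolean operator `o` to `o.1` many argument concepts. -/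
inductive DLConcept : Type where
  | atom : ℕ → DLConcept
  | app : (o : BOp) → (Fin o.1 → DLConcept) → DLConcept
  | ex : ℕ → DLConcept → DLConcept
  | all : ℕ → DLConcept → DLConcept

/-- An interpretation: a nonempty domain `Δ`, a subset of `Δ` for each atomic concept,
a binary relation for each role, and an element for each individual name. -/
structure DLInterp (Δ : Type) where
  ne : Nonempty Δ
  atom : ℕ → Set Δ
  role : ℕ → Set (Δ × Δ)
  ind : ℕ → Δ

attribute [local instance] Classical.propDecidable

/-- Semantics of concepts. -/
noncomputable def DLConcept.sem {Δ : Type} (I : DLInterp Δ) : DLConcept → Set Δ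
  | .atom A => I.atom A
  | .app o cs => {x | o.2 (fun i => decide (x ∈ DLConcept.sem I (cs i))) = true}
  | .ex R C => {x | ∃ y, (x, y) ∈ I.role R ∧ y ∈ DLConcept.sem I C}
  | .all R C => {x | ∀ y, (x, y) ∈ I.role R → y ∈ DLConcept.sem I C}

/-- `C.over B` : the concept `C` uses only Boolean operators from `B`. -/
def DLConcept.over (B : Set BOp) : DLConcept → Prop
  | .atom _ => True
  | .app o cs => o ∈ B ∧ ∀ i, DLConcept.over B (cs i)
  | .ex _ C => DLConcept.over B C
  | .all _ C => DLConcept.over B C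

/-- Satisfaction of a GCI `C ⊑ D`. -/
def satGCI {Δ : Type} (I : DLInterp Δ) (C D : DLConcept) : Prop := C.sem I ⊆ D.sem I

/-- A TBox is a finite list of GCIs; satisfaction of a TBox. -/
def satTBox {Δ : Type} (I : DLInterp Δ) (T : List (DLConcept × DLConcept)) : Prop :=
  ∀ p ∈ T, satGCI I p.1 p.2

/-- TBox satisfiability. -/
def TBoxSat (T : List (DLConcept × DLConcept)) : Prop :=
  ∃ (Δ : Type) (I : DLInterp Δ), satTBox I T

/-- The nullary operator `⊤` (constant true) and the concept it denotes. -/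
def topOp : BOp := ⟨0, fun _ => true⟩
def ctop : DLConcept := .app topOp (fun i => i.elim0)

/-- The nullary operator `⊥` (constant false) and the concept it denotes. -/
def botOp : BOp := ⟨0, fun _ => false⟩
def cbot : DLConcept := .app botOp (fun i => i.elim0)

/-- The unary negation operator and negated concepts. -/
def negOp : BOp := ⟨1, fun v => !(v 0)⟩
def cneg (C : DLConcept) : DLConcept := .app negOp (fun _ => C)

/-- If every operator in `B` is false-reproducing, then in the one-point
interpretation `I` with domain `{w} = PUnit`, `A^I = ∅` for every atomic concept and
`R^I = {(w,w)}` for every role (note `Set.univ = {(w,w)}` on `PUnit × PUnit`),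
every concept `C` over `B` satisfies `C^I = ∅`. -/
theorem stmt_2 (B : Set BOp)
    (hB : ∀ o ∈ B, o.2 (fun _ => false) = false)
    (I : DLInterp PUnit)
    (hatom : ∀ A : ℕ, I.atom A = ∅)
    (hrole : ∀ R : ℕ, I.role R = Set.univ)
    (C : DLConcept) (hC : C.over B) :
    C.sem I = ∅ := by
  induction C with
  | atom A => exact hatom A
  | app o cs ih =>
    ext x
    simp only [DLConcept.sem, Set.mem_setOf_eq, Set.mem_empty_iff_false, iff_false]
    have h : (fun i => decide (x ∈ (cs i).sem I)) = fun _ => false := by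
      funext i
      simp [ih i (hC.2 i)]
    rw [h, hB o hC.1]
    simp
  | ex R C ih =>
    ext x
    simp only [DLConcept.sem, Set.mem_setOf_eq, Set.mem_empty_iff_false, iff_false]
    rintro ⟨y, _, hy⟩
    rw [ih hC] at hy
    exact hy
  | all R C ih =>
    ext x
    simp only [DLConcept.sem, Set.mem_setOf_eq, Set.mem_empty_iff_false, iff_false]
    intro h
    have := h x (by rw [hrole]; trivial)
    rw [ih hC] at this
    exact this
end

section
/- If every operator in B is false-reproducing (f(false,…,false) = false), then TBox satisfiability over B is trivial: every TBox all of whose axioms use only concepts over B is satisfiable. -/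
attribute [local instance] Classical.propDecidable

/-- if every operator in `B` is false-reproducing, then TBox satisfiability
over `B` is trivial: every TBox whose axioms use only operators from `B` is satisfiable. -/
theorem stmt_3 (B : Set BOp)
    (hB : ∀ o ∈ B, o.2 (fun _ => false) = false)
    (T : List (DLConcept × DLConcept))
    (hT : ∀ p ∈ T, p.1.over B ∧ p.2.over B) :
    TBoxSat T := by
  refine ⟨Unit, ⟨⟨()⟩, fun _ => ∅, fun _ => Set.univ, fun _ => ()⟩, ?_⟩
  set I : DLInterp Unit := ⟨⟨()⟩, fun _ => ∅, fun _ => Set.univ, fun _ => ()⟩ with hI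
  have key : ∀ C : DLConcept, C.over B → C.sem I = ∅ := by
    intro C
    induction C with
    | atom A => intro _; rfl
    | app o cs ih =>
      intro ⟨hoB, hcs⟩
      ext x
      simp only [DLConcept.sem, Set.mem_setOf_eq, Set.mem_empty_iff_false, iff_false]
      have : (fun i => decide (x ∈ DLConcept.sem I (cs i))) = fun _ => false := by
        funext i
        simp [ih i (hcs i)]
      rw [this, hB o hoB]
      simp
    | ex R C ih =>
      intro h
      ext x
      simp only [DLConcept.sem, Set.mem_setOf_eq, Set.mem_empty_iff_false, iff_false]
      rintro ⟨y, _, hy⟩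
      rw [ih h] at hy
      exact hy
    | all R C ih =>
      intro h
      ext x
      simp only [DLConcept.sem, Set.mem_setOf_eq, Set.mem_empty_iff_false, iff_false]
      intro hall
      have := hall () (by trivial)
      rw [ih h] at this
      exact this
  intro p hp
  intro x hx
  rw [key p.1 (hT p hp).1] at hx
  exact hx.elim
end

section
/- Every Boolean function g : Bool^n → Bool is computed by some term built from the variables x_1,…,x_n, the constants true and false, and self-dual Boolean functions. In other words, the set of all self-dual Boolean functions together with the two constants generates, under composition, all Boolean functions. -/
/-- Terms over Boolean functions, in variables `x_0, …, x_{n-1}`. -/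
inductive BTerm (n : ℕ) : Type where
  | var : Fin n → BTerm n
  | app : (o : BOp) → (Fin o.1 → BTerm n) → BTerm n

/-- The Boolean function computed by a term. -/
def BTerm.eval {n : ℕ} (v : Fin n → Bool) : BTerm n → Bool
  | .var i => v i
  | .app o ts => o.2 (fun j => BTerm.eval v (ts j))

/-- `t.over B` : the term `t` uses only functions from `B`. -/
def BTerm.over {n : ℕ} (B : Set BOp) : BTerm n → Prop
  | .var _ => True
  | .app o ts => o ∈ B ∧ ∀ j, BTerm.over B (ts j)

/-- Number of occurrences of the variable `x_i` in the syntax tree of a term. -/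
def BTerm.count {n : ℕ} (i : Fin n) : BTerm n → ℕ
  | .var j => if j = i then 1 else 0
  | .app _ ts => ∑ j, BTerm.count i (ts j)

/-- A Boolean function is self-dual if negating all arguments negates its value. -/
def selfDual (o : BOp) : Prop := ∀ v : Fin o.1 → Bool, o.2 (fun i => !(v i)) = !(o.2 v)

/-! Adding a new variable `y`, the function `(x, y) ↦ if y then ¬g(¬x) else g(x)` is self-dual, and
fixing `y := false` recovers `g`. So one self-dual function and the constant `false` suffice. -/

def selfDualExtension {n : ℕ} (g : (Fin n → Bool) → Bool) : BOp :=
  ⟨n + 1, fun w => if w (Fin.last n) then !g (fun i => !Fin.init w i) else g (Fin.init w)⟩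

theorem selfDual_selfDualExtension {n : ℕ} (g : (Fin n → Bool) → Bool) :
    selfDual (selfDualExtension g) := by
  intro w
  cases hw : w (Fin.last n) <;> simp [selfDualExtension, hw, Fin.init] <;> rfl

theorem selfDualExtension_snoc_false {n : ℕ} (g : (Fin n → Bool) → Bool) (v : Fin n → Bool) :
    (selfDualExtension g).2 (Fin.snoc v false) = g v := by
  simp [selfDualExtension]

def BTerm.falseConst (n : ℕ) : BTerm n := .app botOp Fin.elim0

theorem BTerm.over_falseConst {n : ℕ} {B : Set BOp} (hB : botOp ∈ B) :
    (BTerm.falseConst n).over B :=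
  ⟨hB, fun j => j.elim0⟩

@[simp]
theorem BTerm.eval_falseConst {n : ℕ} (v : Fin n → Bool) : (BTerm.falseConst n).eval v = false :=
  rfl

/-- every Boolean function `g : Bool^n → Bool` is computed by a term built
from the variables, the constants `true` and `false`, and self-dual Boolean functions. -/
theorem stmt_11 (n : ℕ) (g : (Fin n → Bool) → Bool) :
    ∃ t : BTerm n, t.over ({o | selfDual o} ∪ {topOp, botOp}) ∧ ∀ v, t.eval v = g v := by
  let args : Fin (n + 1) → BTerm n := Fin.snoc .var (BTerm.falseConst n)
  have args_over (j : Fin (n + 1)) : (args j).over ({o | selfDual o} ∪ {topOp, botOp}) := by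
    induction j using Fin.lastCases with
    | last => simpa [args] using BTerm.over_falseConst (by simp)
    | cast i => simp [args, BTerm.over]
  have eval_args (v : Fin n → Bool) : (fun j => (args j).eval v) = Fin.snoc v false := by
    ext j
    induction j using Fin.lastCases with
    | last => simp [args]
    | cast i => simp [args, BTerm.eval]
  refine ⟨.app (selfDualExtension g) args, ⟨Or.inl (selfDual_selfDualExtension g), args_over⟩,
    fun v => (congrArg (selfDualExtension g).2 (eval_args v)).trans
      (selfDualExtension_snoc_false g v)⟩
end

section
/- Let B be a finite set of Boolean functions such that every function in B is monotone and such that each of the binary disjunction x ∨ y, the constant false, and the constant true is computed by some term over B. Then there exists a term over B in the two variables x and y that computes x ∨ y and in which each of the variables x and y occurs exactly once. -/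
/-- A Boolean function is monotone (order-preserving w.r.t. `false < true` pointwise). -/
def monotoneOp (o : BOp) : Prop :=
  ∀ v w : Fin o.1 → Bool, (∀ i, v i ≤ w i) → o.2 v ≤ o.2 w

/-!
Call `x_i` pivotal for a term `t` at `w` if `t` is `false` at `w[x_i := false]` and `true` at
`w[x_i := true]`. If `x_i` is pivotal at the root `o(t₁, …, tₘ)`, switch `x_i` on in the children
one at a time: at the first switch that changes the value of `o`, monotonicity forces `x_i` to be
pivotal for that child `t_k`. Recursively isolate `x_i` in `t_k`, and substitute the constants
`true` for `x_i` in `t₁, …, t_{k-1}` and `false` in `t_{k+1}, …, tₘ`. The result has one occurrence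
of `x_i`, is still pivotal at `w`, and by monotonicity is at least `t` wherever `x_i` is false.
For `t = x ∨ y` and `w = 0` these three facts force the result to compute `x ∨ y` again; doing
this for `x` and then for `y` gives the read-once term.
-/

open Function

theorem Bool.exists_threshold {m : ℕ} (f : (Fin m → Bool) → Bool)
    (h₀ : f (fun _ => false) = false) (h₁ : f (fun _ => true) = true) :
    ∃ k : Fin m, f (fun j => decide (j < k)) = false ∧ f (fun j => decide (j ≤ k)) = true := by
  let g (l : ℕ) : Bool := f fun j => decide ((j : ℕ) < l)
  have hg : ∀ l, m ≤ l → g l = true := fun l hl => by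
    simpa [g, fun j : Fin m => j.isLt.trans_le hl] using h₁
  obtain ⟨l, hl, hl'⟩ := Nat.exists_not_and_succ_of_not_zero_of_exists (p := fun l => g l = true)
    (by simpa [g] using h₀) ⟨m, hg m le_rfl⟩
  have hlm : l < m := by
    by_contra! h
    exact hl (hg l h)
  refine ⟨⟨l, hlm⟩, by simpa [g, Fin.lt_def] using hl, ?_⟩
  simpa [g, Fin.le_def, Nat.lt_succ_iff] using hl'

namespace BTerm

variable {n : ℕ} {B : Set BOp}

theorem eval_monotone (hmono : ∀ o ∈ B, monotoneOp o) {t : BTerm n} (ht : t.over B) :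
    Monotone fun v => t.eval v := by
  induction t with
  | var i => exact fun v w h => h i
  | app o ts ih => exact fun v w h => hmono o ht.1 _ _ fun j => ih j (ht.2 j) h

theorem eval_update_false_le (hmono : ∀ o ∈ B, monotoneOp o) {t : BTerm n} (ht : t.over B)
    (v : Fin n → Bool) (i : Fin n) : t.eval (update v i false) ≤ t.eval (update v i true) :=
  eval_monotone hmono ht (update_le_update_iff'.2 (Bool.false_le true))

def relabel {m : ℕ} (f : Fin m → Fin n) : BTerm m → BTerm n
  | var j => var (f j)
  | app o ts => app o fun j => (ts j).relabel f

section Relabel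

variable {m : ℕ} (f : Fin m → Fin n)

theorem eval_relabel (v : Fin n → Bool) (t : BTerm m) :
    (t.relabel f).eval v = t.eval (v ∘ f) := by
  induction t with
  | var j => rfl
  | app o ts ih => simp only [relabel, eval, ih]

theorem over_relabel {t : BTerm m} (ht : t.over B) : (t.relabel f).over B := by
  induction t with
  | var j => trivial
  | app o ts ih => exact ⟨ht.1, fun j => ih j (ht.2 j)⟩

theorem count_relabel_of_notMem_range {j : Fin n} (hj : j ∉ Set.range f) (t : BTerm m) :
    (t.relabel f).count j = 0 := by
  induction t with
  | var k => simpa [relabel, count] using fun h => hj ⟨k, h⟩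
  | app o ts ih => simp only [relabel, count, ih, Finset.sum_const_zero]

end Relabel

def subst : BTerm n → Fin n → BTerm n → BTerm n
  | var j, i, s => if j = i then s else var j
  | app o ts, i, s => app o fun j => (ts j).subst i s

section Subst

variable (i : Fin n) {s : BTerm n}

theorem eval_subst (v : Fin n → Bool) (t : BTerm n) :
    (t.subst i s).eval v = t.eval (update v i (s.eval v)) := by
  induction t with
  | var j => by_cases h : j = i <;> simp [subst, eval, h]
  | app o ts ih => simp only [subst, eval, ih]

theorem over_subst (hs : s.over B) {t : BTerm n} (ht : t.over B) : (t.subst i s).over B := by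
  induction t with
  | var j => by_cases h : j = i <;> simp [subst, h, hs, BTerm.over]
  | app o ts ih => exact ⟨ht.1, fun j => ih j (ht.2 j)⟩

theorem count_subst (hs : ∀ j, s.count j = 0) (j : Fin n) (t : BTerm n) :
    (t.subst i s).count j = if j = i then 0 else t.count j := by
  induction t with
  | var k => by_cases hk : k = i <;> by_cases hj : j = i <;> simp_all [subst, count, eq_comm]
  | app o ts ih => simp only [subst, count, ih]; split_ifs <;> simp

end Subst

structure IsConstant (B : Set BOp) (b : Bool) (s : BTerm n) : Prop where
  isOver : s.over B
  eval_eq : ∀ v, s.eval v = b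
  count_eq_zero : ∀ j, s.count j = 0

theorem isConstant_relabel_elim0 {c : BTerm 0} {b : Bool} (hc : c.over B)
    (hb : ∀ v, c.eval v = b) : IsConstant B b (c.relabel Fin.elim0 : BTerm n) where
  isOver := over_relabel _ hc
  eval_eq v := by rw [eval_relabel, hb]
  count_eq_zero j := count_relabel_of_notMem_range _ (by simp) c

def Pivotal (t : BTerm n) (i : Fin n) (w : Fin n → Bool) : Prop :=
  t.eval (update w i false) = false ∧ t.eval (update w i true) = true

theorem pivotal_of_threshold (hmono : ∀ o ∈ B, monotoneOp o) {o : BOp} {ts : Fin o.1 → BTerm n}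
    {k : Fin o.1} (hk : (ts k).over B) {i : Fin n} {w : Fin n → Bool}
    (h₀ : o.2 (fun j => (ts j).eval (update w i (decide (j < k)))) = false)
    (h₁ : o.2 (fun j => (ts j).eval (update w i (decide (j ≤ k)))) = true) :
    (ts k).Pivotal i w := by
  have hne : (ts k).eval (update w i false) ≠ (ts k).eval (update w i true) := by
    intro heq
    apply Bool.false_ne_true
    rw [← h₀, ← h₁]
    refine congrArg o.2 (funext fun j => ?_)
    rcases lt_trichotomy j k with hj | rfl | hj
    · simp [hj, hj.le]
    · simpa using heq
    · simp [hj.not_gt, hj.not_ge]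
  exact Bool.lt_iff.1 ((eval_update_false_le hmono hk w i).lt_of_ne hne)

def hybrid {m : ℕ} (i : Fin n) (s₀ s₁ : BTerm n) (ts : Fin m → BTerm n) (k : Fin m)
    (u : BTerm n) (j : Fin m) : BTerm n :=
  if j < k then (ts j).subst i s₁ else if j = k then u else (ts j).subst i s₀

section Hybrid

variable {m : ℕ} {i : Fin n} {s₀ s₁ : BTerm n} {ts : Fin m → BTerm n} {k : Fin m}
  {u : BTerm n}

theorem over_hybrid (hs₀ : s₀.over B) (hs₁ : s₁.over B) (hts : ∀ j, (ts j).over B)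
    (hu : u.over B) (j : Fin m) : (hybrid i s₀ s₁ ts k u j).over B := by
  unfold hybrid
  split_ifs
  exacts [over_subst i hs₁ (hts j), hu, over_subst i hs₀ (hts j)]

theorem count_hybrid (hs₀ : ∀ j, s₀.count j = 0) (hs₁ : ∀ j, s₁.count j = 0) (j' : Fin n)
    (j : Fin m) : (hybrid i s₀ s₁ ts k u j).count j' =
      if j = k then u.count j' else if j' = i then 0 else (ts j).count j' := by
  unfold hybrid
  rcases lt_trichotomy j k with hj | rfl | hj
  · simp [hj, hj.ne, count_subst _ hs₁]
  · simp
  · simp [hj.not_gt, hj.ne', count_subst _ hs₀]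

theorem eval_hybrid (hs₀ : ∀ v, s₀.eval v = false) (hs₁ : ∀ v, s₁.eval v = true)
    (v : Fin n → Bool) (j : Fin m) : (hybrid i s₀ s₁ ts k u j).eval v =
      if j < k then (ts j).eval (update v i true)
      else if j = k then u.eval v else (ts j).eval (update v i false) := by
  unfold hybrid
  split_ifs <;> simp [eval_subst, hs₀, hs₁]

end Hybrid

structure IsIsolation (B : Set BOp) (i : Fin n) (w : Fin n → Bool) (t u : BTerm n) : Prop where
  isOver : u.over B
  count_self : u.count i = 1
  count_ne : ∀ j ≠ i, u.count j = t.count j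
  pivotal : u.Pivotal i w
  le_eval : ∀ v, t.eval (update v i false) ≤ u.eval (update v i false)

theorem IsIsolation.exists_app (hmono : ∀ o ∈ B, monotoneOp o) {s₀ s₁ : BTerm n}
    (hs₀ : IsConstant B false s₀) (hs₁ : IsConstant B true s₁) {o : BOp}
    {ts : Fin o.1 → BTerm n} (ho : (app o ts).over B) {i : Fin n} {w : Fin n → Bool}
    (hpiv : (app o ts).Pivotal i w)
    (ih : ∀ k, (ts k).Pivotal i w → ∃ u, IsIsolation B i w (ts k) u) :
    ∃ u, IsIsolation B i w (app o ts) u := by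
  obtain ⟨k, hk₀, hk₁⟩ :=
    Bool.exists_threshold (fun x => o.2 fun j => (ts j).eval (update w i (x j))) hpiv.1 hpiv.2
  have hk := pivotal_of_threshold hmono (ho.2 k) hk₀ hk₁
  obtain ⟨u, hu⟩ := ih k hk
  have heval := eval_hybrid (i := i) (ts := ts) (k := k) (u := u) hs₀.eval_eq hs₁.eval_eq
  have hcount := count_hybrid (i := i) (ts := ts) (k := k) (u := u)
    hs₀.count_eq_zero hs₁.count_eq_zero
  refine ⟨app o (hybrid i s₀ s₁ ts k u),
    ⟨⟨ho.1, over_hybrid hs₀.isOver hs₁.isOver ho.2 hu.isOver⟩, ?_, fun j hj => ?_, ⟨?_, ?_⟩,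
    fun v => hmono o ho.1 _ _ fun j => ?_⟩⟩
  · simp [count, hcount, hu.count_self]
  · refine Finset.sum_congr rfl fun j' _ => ?_
    rw [hcount]
    split_ifs with h
    · exact h ▸ hu.count_ne j hj
    · rfl
  · refine Eq.trans (congrArg o.2 (funext fun j => ?_)) hk₀
    rw [heval]
    rcases lt_trichotomy j k with hj | rfl | hj
    · simp [hj]
    · simp [hu.pivotal.1, hk.1]
    · simp [hj.not_gt, hj.ne']
  · refine Eq.trans (congrArg o.2 (funext fun j => ?_)) hk₁
    rw [heval]
    rcases lt_trichotomy j k with hj | rfl | hj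
    · simp [hj, hj.le]
    · simp [hu.pivotal.2, hk.2]
    · simp [hj.not_gt, hj.not_ge, hj.ne']
  · rw [heval]
    rcases lt_trichotomy j k with hj | rfl | hj
    · simpa [hj] using eval_update_false_le hmono (ho.2 j) v i
    · simpa using hu.le_eval v
    · simp [hj.not_gt, hj.ne']

theorem exists_isIsolation (hmono : ∀ o ∈ B, monotoneOp o) {s₀ s₁ : BTerm n}
    (hs₀ : IsConstant B false s₀) (hs₁ : IsConstant B true s₁) {t : BTerm n} (ht : t.over B)
    {i : Fin n} {w : Fin n → Bool} (hpiv : t.Pivotal i w) : ∃ u, IsIsolation B i w t u := by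
  induction t with
  | var j =>
    obtain rfl : j = i := by
      by_contra h
      simp [Pivotal, eval, update_of_ne h] at hpiv
    exact ⟨var j, trivial, by simp [count], fun _ _ => rfl, hpiv, fun _ => le_rfl⟩
  | app o ts ih => exact IsIsolation.exists_app hmono hs₀ hs₁ ht hpiv fun k => ih k (ht.2 k)

theorem exists_or_count_eq_one (hmono : ∀ o ∈ B, monotoneOp o) {s₀ s₁ : BTerm 2}
    (hs₀ : IsConstant B false s₀) (hs₁ : IsConstant B true s₁) {t : BTerm 2} (ht : t.over B)
    (hor : ∀ v, t.eval v = (v 0 || v 1)) (i : Fin 2) :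
    ∃ u : BTerm 2, u.over B ∧ (∀ v, u.eval v = (v 0 || v 1)) ∧ u.count i = 1 ∧
      ∀ j ≠ i, u.count j = t.count j := by
  have hpiv : t.Pivotal i fun _ => false := by fin_cases i <;> simp [Pivotal, hor]
  obtain ⟨u, hu⟩ := exists_isIsolation hmono hs₀ hs₁ ht hpiv
  refine ⟨u, hu.isOver, fun v => ?_, hu.count_self, hu.count_ne⟩
  cases hvi : v i
  · have hle := hu.le_eval v
    rw [← hvi, update_eq_self, hor] at hle
    cases hv : (v 0 || v 1)
    · have hv' : v = fun _ => false := by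
        funext j
        fin_cases j <;> simp_all
      simpa [hv'] using hu.pivotal.1
    · exact le_antisymm (Bool.le_true _) (hv ▸ hle)
  · have hle : u.eval (update (fun _ => false) i true) ≤ u.eval v :=
      eval_monotone hmono hu.isOver fun j => by by_cases hj : j = i <;> simp [hj, hvi]
    rw [hu.pivotal.2] at hle
    fin_cases i <;> simp_all [le_antisymm (Bool.le_true _) hle]

end BTerm

theorem stmt_13_general (B : Set BOp)
    (hmono : ∀ o ∈ B, monotoneOp o)
    (hor : ∃ t : BTerm 2, t.over B ∧ ∀ v, t.eval v = (v 0 || v 1))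
    (hfalse : ∃ t : BTerm 0, t.over B ∧ ∀ v, t.eval v = false)
    (htrue : ∃ t : BTerm 0, t.over B ∧ ∀ v, t.eval v = true) :
    ∃ t : BTerm 2, t.over B ∧ (∀ v, t.eval v = (v 0 || v 1)) ∧
      t.count 0 = 1 ∧ t.count 1 = 1 := by
  obtain ⟨c₀, hc₀, hv₀⟩ := hfalse
  obtain ⟨c₁, hc₁, hv₁⟩ := htrue
  have hs₀ := BTerm.isConstant_relabel_elim0 (n := 2) hc₀ hv₀
  have hs₁ := BTerm.isConstant_relabel_elim0 (n := 2) hc₁ hv₁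
  obtain ⟨t, ht, htor⟩ := hor
  obtain ⟨u, hu, huor, hu0, -⟩ := BTerm.exists_or_count_eq_one hmono hs₀ hs₁ ht htor 0
  obtain ⟨z, hz, hzor, hz1, hz0⟩ := BTerm.exists_or_count_eq_one hmono hs₀ hs₁ hu huor 1
  exact ⟨z, hz, hzor, (hz0 0 (by decide)).trans hu0, hz1⟩

/-- if `B` is a finite set of monotone Boolean functions such that binary
disjunction, the constant `false`, and the constant `true` are each computed by some term
over `B`, then some term over `B` computes `x ∨ y` with each variable occurring exactly once. -/
theorem stmt_13 (B : Set BOp) (hfin : B.Finite)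
    (hmono : ∀ o ∈ B, monotoneOp o)
    (hor : ∃ t : BTerm 2, t.over B ∧ ∀ v, t.eval v = (v 0 || v 1))
    (hfalse : ∃ t : BTerm 0, t.over B ∧ ∀ v, t.eval v = false)
    (htrue : ∃ t : BTerm 0, t.over B ∧ ∀ v, t.eval v = true) :
    ∃ t : BTerm 2, t.over B ∧ (∀ v, t.eval v = (v 0 || v 1)) ∧
      t.count 0 = 1 ∧ t.count 1 = 1 :=
  stmt_13_general B hmono hor hfalse htrue
end

section
/- Let B be a finite set of Boolean functions such that each of the unary negation ¬x and the constants false and true is computed by some term over B. Then there exists a term over B in the single variable x that computes ¬x and in which the variable x occurs exactly once. -/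
/-!
Read-once negation. By induction on a term `t` in one variable whose value changes between
`x = false` and `x = true`, we produce a term with one occurrence of `x` computing the same
function. At the root `o(t₁, …, tₘ)`, walk from the tuple of values of the `tⱼ` at `false` to
the tuple at `true`, one coordinate at a time: some single step `k` changes the value of `o`.
The subterm `tₖ` is then non-constant, so it has a read-once equivalent `s`, and
`o(c₁, …, s, …, cₘ)`, with the other arguments frozen to constant terms at that step of the
walk, computes the same function as `t`. Applied to a term for `¬x`, this proves the theorem.
-/

open Function

theorem exists_update_ne_of_ne {ι β γ : Type*} [Fintype ι] [DecidableEq ι]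
    (g : (ι → β) → γ) {a b : ι → β} (h : g a ≠ g b) :
    ∃ k c, g (update c k (a k)) = g a ∧ g (update c k (b k)) ≠ g a := by
  let mix : Finset ι → ι → β := fun s i => if i ∈ s then b i else a i
  suffices ∀ s, g (mix s) ≠ g a → ∃ k c, g (update c k (a k)) = g a ∧
      g (update c k (b k)) ≠ g a from
    this Finset.univ (by simpa [mix] using h.symm)
  intro s
  induction s using Finset.induction_on with
  | empty => simp [mix]
  | insert k s hk ih =>
    intro hne
    by_cases hs : g (mix s) = g a
    · refine ⟨k, mix s, ?_, ?_⟩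
      · have hka : mix s k = a k := if_neg hk
        rwa [← hka, update_eq_self]
      · have : update (mix s) k (b k) = mix (insert k s) := by
          funext i
          by_cases hi : i = k <;> simp [mix, hi]
        rwa [this]
    · exact ih hs

theorem fun_fin_one_ext {β : Type*} {f g : (Fin 1 → Bool) → β}
    (h : ∀ b, f (fun _ => b) = g (fun _ => b)) : f = g := by
  funext v
  have hv : v = fun _ => v 0 := funext fun i => by rw [Subsingleton.elim i 0]
  rw [hv, h]

namespace BTerm

variable {m n : ℕ}

def rename (f : Fin n → Fin m) : BTerm n → BTerm m
  | .var i => .var (f i)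
  | .app o ts => .app o fun j => rename f (ts j)

theorem over_rename {B : Set BOp} (f : Fin n → Fin m) :
    ∀ {t : BTerm n}, t.over B → (t.rename f).over B
  | .var _, _ => trivial
  | .app _ _, h => ⟨h.1, fun j => over_rename f (h.2 j)⟩

theorem eval_rename (f : Fin n → Fin m) (v : Fin m → Bool) :
    ∀ t : BTerm n, (t.rename f).eval v = t.eval (v ∘ f)
  | .var _ => rfl
  | .app o ts => congrArg o.2 (funext fun j => eval_rename f v (ts j))

theorem count_rename_of_notMem_range (f : Fin n → Fin m) {i : Fin m} (hi : i ∉ Set.range f) :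
    ∀ t : BTerm n, (t.rename f).count i = 0
  | .var j => if_neg fun h => hi ⟨j, h⟩
  | .app _ ts => Finset.sum_eq_zero fun j _ => count_rename_of_notMem_range f hi (ts j)

theorem exists_count_eq_one_of_eval_ne {B : Set BOp}
    (hconst : ∀ b : Bool, ∃ c : BTerm 1, c.over B ∧ c.count 0 = 0 ∧ ∀ v, c.eval v = b) :
    ∀ t : BTerm 1, t.over B → t.eval (fun _ => false) ≠ t.eval (fun _ => true) →
      ∃ s : BTerm 1, s.over B ∧ s.count 0 = 1 ∧ ∀ v, s.eval v = t.eval v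
  | .var i, _, _ => ⟨.var 0, trivial, rfl, fun v => by rw [Subsingleton.elim i 0]⟩
  | .app o ts, ⟨hoB, hts⟩, hne => by
    obtain ⟨k, c, hka, hkb⟩ := exists_update_ne_of_ne o.2 hne
    have hk : (ts k).eval (fun _ => false) ≠ (ts k).eval (fun _ => true) := fun h =>
      hkb (by rwa [← h])
    obtain ⟨s, hsB, hscount, hseval⟩ := exists_count_eq_one_of_eval_ne hconst (ts k) (hts k) hk
    choose d hdB hdcount hdeval using hconst
    let us := update (fun j => d (c j)) k s
    have heval (v) : (BTerm.app o us).eval v = o.2 (update c k (s.eval v)) :=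
      congrArg o.2 <| funext fun j => by by_cases hj : j = k <;> simp [us, hj, hdeval]
    refine ⟨.app o us, ⟨hoB, fun j => ?_⟩, ?_, funext_iff.mp (fun_fin_one_ext fun b => ?_)⟩
    · by_cases hj : j = k <;> simp [us, hj, hsB, hdB]
    · rw [count, Finset.sum_eq_single_of_mem k (Finset.mem_univ k) fun j _ hj => by
        simp [us, hj, hdcount]]
      simpa [us] using hscount
    · rw [heval, hseval]
      -- at `true` both sides differ from the common value at `false`, and `Bool` has two elements
      cases b
      · exact hka
      · exact (Bool.eq_not_of_ne hkb).trans (Bool.eq_not_of_ne hne.symm).symm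

end BTerm

theorem stmt_14_general (B : Set BOp)
    (hneg : ∃ t : BTerm 1, t.over B ∧ ∀ v, t.eval v = !(v 0))
    (hfalse : ∃ t : BTerm 0, t.over B ∧ ∀ v, t.eval v = false)
    (htrue : ∃ t : BTerm 0, t.over B ∧ ∀ v, t.eval v = true) :
    ∃ t : BTerm 1, t.over B ∧ (∀ v, t.eval v = !(v 0)) ∧ t.count 0 = 1 := by
  obtain ⟨t, htB, ht⟩ := hneg
  have hconst (b : Bool) : ∃ c : BTerm 1, c.over B ∧ c.count 0 = 0 ∧ ∀ v, c.eval v = b := by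
    obtain ⟨c, hcB, hc⟩ : ∃ c : BTerm 0, c.over B ∧ ∀ v, c.eval v = b := by
      cases b
      exacts [hfalse, htrue]
    exact ⟨c.rename Fin.elim0, BTerm.over_rename _ hcB,
      BTerm.count_rename_of_notMem_range _ (by simp) c,
      fun v => (BTerm.eval_rename _ v c).trans (hc _)⟩
  obtain ⟨s, hsB, hscount, hs⟩ :=
    BTerm.exists_count_eq_one_of_eval_ne hconst t htB (by simp [ht])
  exact ⟨s, hsB, fun v => (hs v).trans (ht v), hscount⟩

/-- if `B` is a finite set of Boolean functions such that unary negation and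
the constants `false` and `true` are each computed by some term over `B`, then some term
over `B` computes `¬x` with the variable `x` occurring exactly once. -/
theorem stmt_14 (B : Set BOp) (hfin : B.Finite)
    (hneg : ∃ t : BTerm 1, t.over B ∧ ∀ v, t.eval v = !(v 0))
    (hfalse : ∃ t : BTerm 0, t.over B ∧ ∀ v, t.eval v = false)
    (htrue : ∃ t : BTerm 0, t.over B ∧ ∀ v, t.eval v = true) :
    ∃ t : BTerm 1, t.over B ∧ (∀ v, t.eval v = !(v 0)) ∧ t.count 0 = 1 :=
  stmt_14_general B hneg hfalse htrue
end

section
/- Let φ = Q_1 x_1 Q_2 x_2 ⋯ Q_n x_n (C_1 ∧ ⋯ ∧ C_m) be a closed quantified Boolean formula with Q_i ∈ {∃,∀} and each C_j a disjunction of exactly three literals over the variables x_1,…,x_n. Define the TBox T_φ, all of whose concepts use only the Boolean operators ⊤ and ⊥ (the nullary constants true and false), using atomic concepts d_0,…,d_n, x_1,…,x_n, x_1',…,x_n', C_1,…,C_m, C_1',…,C_m', f, f' and roles S, R_1,…,R_n, R_{x_1},…,R_{x_n}, R_{d_0},…,R_{d_n}, R_{C_1},…,R_{C_m}, F, and P_{1j},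 P_{2j} for 1 ≤ j ≤ m. For a literal ℓ, let ℓ~ denote the atomic concept x_i' if ℓ = x_i and the atomic concept x_i if ℓ = ¬x_i. T_φ consists of the axioms: (1) ⊤ ⊑ ∃S.d_0; (2) x_i ≡ ∃R_{x_i}.⊤ and x_i' ≡ ∀R_{x_i}.⊥ for 1 ≤ i ≤ n; (3) d_i ⊑ ∃R_{i+1}.x_{i+1} and d_i ⊑ ∃R_{i+1}.x_{i+1}' for 0 ≤ i < n; (4) d_i ⊑ ∀R_{i+1}.d_{i+1} for 0 ≤ i < n, together with d_i ⊑ ∃R_{d_i}.⊤ and d_j ⊑ ∀R_{d_i}.⊥ for all 0 ≤ i < j ≤ n; (5) x_i ⊑ ∀R_j.x_i and x_i' ⊑ ∀R_j.x_i' for 1 ≤ i < j ≤ n; (6) for each clause C_j = ℓ_{1j} ∨ ℓ_{2j} ∨ ℓ_{3j}: ℓ~_{1j} ⊑ ∃P_{1j}.⊤, ℓ~_{2j} ⊑ ∀P_{1j}.ℓ~_{2j}, ∃P_{1j}.ℓ~_{2j} ⊑ ∃P_{2j}.⊤, ℓ~_{3j} ⊑ ∀P_{2j}.ℓ~_{3j},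 and ∃P_{2j}.ℓ~_{3j} ⊑ C_j'; (7) C_j' ⊑ f for 1 ≤ j ≤ m; (8) f ⊑ ∃F.⊤ and f' ⊑ ∀F.⊥; (9) C_j ≡ ∃R_{C_j}.⊤ and C_j' ≡ ∀R_{C_j}.⊥ for 1 ≤ j ≤ m; (10) d_0 ⊑ Q_1 R_1.Q_2 R_2.⋯ Q_n R_n.f', where Q_i R_i. stands for ∃R_i. if Q_i = ∃ and for ∀R_i. if Q_i = ∀. Then φ evaluates to true if and only if T_φ is satisfiable. -/
attribute [local instance] Classical.propDecidable

/-! ### Quantified Boolean formulas in 3-CNF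

Variables are `x_0, …, x_{n-1}` (zero-based; the paper's `x_{i+1}` is our `x_i`).
A literal is a pair `(v, sign)` with `sign = true` for the positive literal. -/

/-- Evaluation of a literal under an assignment `σ : ℕ → Bool`. -/
def litEval {n : ℕ} (σ : ℕ → Bool) (l : Fin n × Bool) : Bool :=
  if l.2 then σ l.1.val else !(σ l.1.val)

/-- Evaluation of the 3-CNF matrix `C_1 ∧ ⋯ ∧ C_m` under an assignment. -/
def matrixEval {n m : ℕ}
    (Cl : Fin m → (Fin n × Bool) × (Fin n × Bool) × (Fin n × Bool))
    (σ : ℕ → Bool) : Prop :=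
  ∀ j : Fin m,
    (litEval σ (Cl j).1 || litEval σ (Cl j).2.1 || litEval σ (Cl j).2.2) = true

/-- Evaluation of the quantifier prefix (`true` = `∃`, `false` = `∀`), binding the
variables `i, i+1, …` in order, over the matrix `ψ`. -/
def qbfEval : List Bool → ℕ → ((ℕ → Bool) → Prop) → (ℕ → Bool) → Prop
  | [], _, ψ, σ => ψ σ
  | q :: qs, i, ψ, σ =>
      if q then ∃ b, qbfEval qs (i + 1) ψ (Function.update σ i b)
      else ∀ b, qbfEval qs (i + 1) ψ (Function.update σ i b)

/-! ### Names of the atomic concepts and roles used by `T_φ`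
(pairwise distinct by the choice of residues). -/

def dA (i : ℕ) : ℕ := 7 * i       -- level concepts d_0, …, d_n
def xpA (i : ℕ) : ℕ := 7 * i + 1  -- variable concepts x_{i+1}
def xmA (i : ℕ) : ℕ := 7 * i + 2  -- complementary variable concepts x_{i+1}'
def cpA (j : ℕ) : ℕ := 7 * j + 3  -- clause concepts C_{j+1}
def cmA (j : ℕ) : ℕ := 7 * j + 4  -- complementary clause concepts C_{j+1}'
def fA : ℕ := 5                   -- concept f
def fA' : ℕ := 6                  -- concept f'

def rS : ℕ := 6                   -- role S
def rF : ℕ := 7                   -- role F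
def rR (i : ℕ) : ℕ := 8 * i       -- roles R_{i+1}
def rX (i : ℕ) : ℕ := 8 * i + 1   -- roles R_{x_{i+1}}
def rD (i : ℕ) : ℕ := 8 * i + 2   -- roles R_{d_i}
def rC (j : ℕ) : ℕ := 8 * j + 3   -- roles R_{C_{j+1}}
def rP1 (j : ℕ) : ℕ := 8 * j + 4  -- roles P_{1,j+1}
def rP2 (j : ℕ) : ℕ := 8 * j + 5  -- roles P_{2,j+1}

/-- `ℓ~`: the atomic concept `x_i'` if `ℓ = x_i`, and `x_i` if `ℓ = ¬x_i`. -/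
def til {n : ℕ} (l : Fin n × Bool) : DLConcept :=
  if l.2 then .atom (xmA l.1.val) else .atom (xpA l.1.val)

/-- `C ≡ D` as the two GCIs `C ⊑ D` and `D ⊑ C`. -/
def eqAx (C D : DLConcept) : List (DLConcept × DLConcept) := [(C, D), (D, C)]

/-- `Q_1 R_1.Q_2 R_2.⋯Q_n R_n.base` where `∃R.` is used for `true` and `∀R.` for `false`. -/
def quantChain : List (Bool × ℕ) → DLConcept → DLConcept
  | [], base => base
  | (q, r) :: rest, base =>
      if q then .ex r (quantChain rest base) else .all r (quantChain rest base)

/-- The TBox `T_φ` of STATEMENT 15, for `φ = Q_1 x_1 ⋯ Q_n x_n (C_1 ∧ ⋯ ∧ C_m)`. -/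
def Tphi (n m : ℕ) (Q : Fin n → Bool)
    (Cl : Fin m → (Fin n × Bool) × (Fin n × Bool) × (Fin n × Bool)) :
    List (DLConcept × DLConcept) :=
  -- (1) ⊤ ⊑ ∃S.d_0
  [(ctop, .ex rS (.atom (dA 0)))]
  -- (2) x_i ≡ ∃R_{x_i}.⊤ and x_i' ≡ ∀R_{x_i}.⊥
  ++ (List.ofFn fun i : Fin n =>
        eqAx (.atom (xpA i.val)) (.ex (rX i.val) ctop) ++
        eqAx (.atom (xmA i.val)) (.all (rX i.val) cbot)).flatten
  -- (3) d_i ⊑ ∃R_{i+1}.x_{i+1} and d_i ⊑ ∃R_{i+1}.x_{i+1}'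
  ++ (List.ofFn fun i : Fin n =>
        [(DLConcept.atom (dA i.val), DLConcept.ex (rR i.val) (.atom (xpA i.val))),
         (DLConcept.atom (dA i.val), DLConcept.ex (rR i.val) (.atom (xmA i.val)))]).flatten
  -- (4) d_i ⊑ ∀R_{i+1}.d_{i+1}
  ++ (List.ofFn fun i : Fin n =>
        (DLConcept.atom (dA i.val), DLConcept.all (rR i.val) (.atom (dA (i.val + 1)))))
  -- (4) d_i ⊑ ∃R_{d_i}.⊤ and d_j ⊑ ∀R_{d_i}.⊥ for 0 ≤ i < j ≤ n
  ++ ((List.range (n + 1)).flatMap fun i => (List.range (n + 1)).flatMap fun j =>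
        if i < j then
          [(DLConcept.atom (dA i), DLConcept.ex (rD i) ctop),
           (DLConcept.atom (dA j), DLConcept.all (rD i) cbot)]
        else [])
  -- (5) x_i ⊑ ∀R_j.x_i and x_i' ⊑ ∀R_j.x_i' for 1 ≤ i < j ≤ n
  ++ ((List.range n).flatMap fun i => (List.range n).flatMap fun j =>
        if i < j then
          [(DLConcept.atom (xpA i), DLConcept.all (rR j) (.atom (xpA i))),
           (DLConcept.atom (xmA i), DLConcept.all (rR j) (.atom (xmA i)))]
        else [])
  -- (6) clause axioms for C_j = ℓ_{1j} ∨ ℓ_{2j} ∨ ℓ_{3j}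
  ++ (List.ofFn fun j : Fin m =>
        [(til (Cl j).1, DLConcept.ex (rP1 j.val) ctop),
         (til (Cl j).2.1, DLConcept.all (rP1 j.val) (til (Cl j).2.1)),
         (DLConcept.ex (rP1 j.val) (til (Cl j).2.1), DLConcept.ex (rP2 j.val) ctop),
         (til (Cl j).2.2, DLConcept.all (rP2 j.val) (til (Cl j).2.2)),
         (DLConcept.ex (rP2 j.val) (til (Cl j).2.2), DLConcept.atom (cmA j.val))]).flatten
  -- (7) C_j' ⊑ f
  ++ (List.ofFn fun j : Fin m => (DLConcept.atom (cmA j.val), DLConcept.atom fA))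
  -- (8) f ⊑ ∃F.⊤ and f' ⊑ ∀F.⊥
  ++ [(DLConcept.atom fA, DLConcept.ex rF ctop),
      (DLConcept.atom fA', DLConcept.all rF cbot)]
  -- (9) C_j ≡ ∃R_{C_j}.⊤ and C_j' ≡ ∀R_{C_j}.⊥
  ++ (List.ofFn fun j : Fin m =>
        eqAx (.atom (cpA j.val)) (.ex (rC j.val) ctop) ++
        eqAx (.atom (cmA j.val)) (.all (rC j.val) cbot)).flatten
  -- (10) d_0 ⊑ Q_1 R_1.Q_2 R_2.⋯Q_n R_n.f'
  ++ [(DLConcept.atom (dA 0),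
       quantChain (List.ofFn fun i : Fin n => (Q i, rR i.val)) (.atom fA'))]

/-!
If `φ` is true, the tree of partial assignments is a model of `T_φ`: the node `(σ, i)` lies in
`d_i`, `R_{i+1}` extends `σ` by a value of `x_{i+1}`, every other concept is read off `σ`, and the
remaining roles are self-loops exactly where the corresponding `∃R.⊤` must hold. The true QBF
makes the root satisfy the quantifier chain, whose leaves are then in `f'`.

Conversely, in a model of `T_φ`, axiom (1) yields an element of `d_0` satisfying the chain. Along
`R`-successors the memberships in `x_k` are inherited (5) and encode an assignment, and (3) offers
both values of `x_{i+1}` at a universal level, so the chain unfolds into the evaluation of `φ`. At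
a leaf, which is in `f'`, a falsified clause would force an `F`-successor through (6)–(8).
-/

namespace DLConcept

variable {Δ : Type} (I : DLInterp Δ)

@[simp] theorem mem_sem_ctop (x : Δ) : x ∈ ctop.sem I := rfl

@[simp] theorem notMem_sem_cbot (x : Δ) : x ∉ cbot.sem I := by
  simp [cbot, botOp, sem]

@[simp] theorem sem_atom (A : ℕ) : (atom A).sem I = I.atom A := rfl

@[simp] theorem mem_sem_ex (R : ℕ) (C : DLConcept) (x : Δ) :
    x ∈ (ex R C).sem I ↔ ∃ y, (x, y) ∈ I.role R ∧ y ∈ C.sem I := Iff.rfl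

@[simp] theorem mem_sem_all (R : ℕ) (C : DLConcept) (x : Δ) :
    x ∈ (all R C).sem I ↔ ∀ y, (x, y) ∈ I.role R → y ∈ C.sem I := Iff.rfl

end DLConcept

section TBox

variable {Δ : Type} (I : DLInterp Δ)

@[simp] theorem satTBox_nil : satTBox I [] := by simp [satTBox]

@[simp] theorem satTBox_cons (p : DLConcept × DLConcept) (T : List (DLConcept × DLConcept)) :
    satTBox I (p :: T) ↔ satGCI I p.1 p.2 ∧ satTBox I T := List.forall_mem_cons

@[simp] theorem satTBox_append (T T' : List (DLConcept × DLConcept)) :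
    satTBox I (T ++ T') ↔ satTBox I T ∧ satTBox I T' := List.forall_mem_append

@[simp] theorem satTBox_flatten (L : List (List (DLConcept × DLConcept))) :
    satTBox I L.flatten ↔ ∀ T ∈ L, satTBox I T := List.forall_mem_flatten

@[simp] theorem satTBox_flatMap {α : Type} (l : List α) (f : α → List (DLConcept × DLConcept)) :
    satTBox I (l.flatMap f) ↔ ∀ a ∈ l, satTBox I (f a) := List.forall_mem_flatMap

@[simp] theorem satTBox_ofFn {k : ℕ} (f : Fin k → DLConcept × DLConcept) :
    satTBox I (List.ofFn f) ↔ ∀ i, satGCI I (f i).1 (f i).2 := by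
  simp [satTBox]

@[simp] theorem satTBox_ite_nil (c : Prop) [Decidable c] (T : List (DLConcept × DLConcept)) :
    satTBox I (if c then T else []) ↔ (c → satTBox I T) := by
  split_ifs <;> simp_all

@[simp] theorem satTBox_eqAx (C D : DLConcept) : satTBox I (eqAx C D) ↔ C.sem I = D.sem I := by
  simp [eqAx, satGCI, Set.Subset.antisymm_iff]

end TBox

def quantRoles (qs : List Bool) (i : ℕ) : List (Bool × ℕ) :=
  (qs.zipIdx i).map fun p => (p.1, rR p.2)

theorem ofFn_eq_quantRoles {n : ℕ} (Q : Fin n → Bool) :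
    List.ofFn (fun i : Fin n => (Q i, rR i)) = quantRoles (List.ofFn Q) 0 := by
  apply List.ext_getElem <;> simp [quantRoles]

open DLConcept

/-- `T_φ` axiom by axiom, in the order of `Tphi`, with each `≡` read as an equality of
extensions. -/
structure IsTphiModel {Δ : Type} (I : DLInterp Δ) {n m : ℕ} (Q : Fin n → Bool)
    (Cl : Fin m → (Fin n × Bool) × (Fin n × Bool) × (Fin n × Bool)) : Prop where
  root : satGCI I ctop (ex rS (atom (dA 0)))
  var_pos : ∀ i : Fin n, (atom (xpA i)).sem I = (ex (rX i) ctop).sem I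
  var_neg : ∀ i : Fin n, (atom (xmA i)).sem I = (all (rX i) cbot).sem I
  branch_pos : ∀ i : Fin n, satGCI I (atom (dA i)) (ex (rR i) (atom (xpA i)))
  branch_neg : ∀ i : Fin n, satGCI I (atom (dA i)) (ex (rR i) (atom (xmA i)))
  level_succ : ∀ i : Fin n, satGCI I (atom (dA i)) (all (rR i) (atom (dA (i + 1))))
  level_ex : ∀ i < n + 1, ∀ j < n + 1, i < j → satGCI I (atom (dA i)) (ex (rD i) ctop)
  level_all : ∀ i < n + 1, ∀ j < n + 1, i < j → satGCI I (atom (dA j)) (all (rD i) cbot)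
  keep_pos : ∀ k < n, ∀ j < n, k < j → satGCI I (atom (xpA k)) (all (rR j) (atom (xpA k)))
  keep_neg : ∀ k < n, ∀ j < n, k < j → satGCI I (atom (xmA k)) (all (rR j) (atom (xmA k)))
  clause_P1 : ∀ j : Fin m, satGCI I (til (Cl j).1) (ex (rP1 j) ctop)
  clause_P1_keep : ∀ j : Fin m, satGCI I (til (Cl j).2.1) (all (rP1 j) (til (Cl j).2.1))
  clause_P2 : ∀ j : Fin m, satGCI I (ex (rP1 j) (til (Cl j).2.1)) (ex (rP2 j) ctop)
  clause_P2_keep : ∀ j : Fin m, satGCI I (til (Cl j).2.2) (all (rP2 j) (til (Cl j).2.2))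
  clause_neg : ∀ j : Fin m, satGCI I (ex (rP2 j) (til (Cl j).2.2)) (atom (cmA j))
  clause_neg_f : ∀ j : Fin m, satGCI I (atom (cmA j)) (atom fA)
  f_ex : satGCI I (atom fA) (ex rF ctop)
  f'_all : satGCI I (atom fA') (all rF cbot)
  clause_pos_eq : ∀ j : Fin m, (atom (cpA j)).sem I = (ex (rC j) ctop).sem I
  clause_neg_eq : ∀ j : Fin m, (atom (cmA j)).sem I = (all (rC j) cbot).sem I
  root_chain :
    satGCI I (atom (dA 0)) (quantChain (List.ofFn fun i : Fin n => (Q i, rR i)) (atom fA'))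

theorem satTBox_Tphi_iff {Δ : Type} (I : DLInterp Δ) {n m : ℕ} (Q : Fin n → Bool)
    (Cl : Fin m → (Fin n × Bool) × (Fin n × Bool) × (Fin n × Bool)) :
    satTBox I (Tphi n m Q Cl) ↔ IsTphiModel I Q Cl := by
  simp only [Tphi, satTBox_append, satTBox_cons, satTBox_nil, satTBox_flatten, satTBox_flatMap,
    satTBox_ofFn, satTBox_ite_nil, satTBox_eqAx, List.mem_ofFn, List.mem_range,
    forall_exists_index, forall_apply_eq_imp_iff, and_true]
  constructor
  · rintro ⟨⟨⟨⟨⟨⟨⟨⟨⟨⟨h1, h2⟩, h3⟩, h4⟩, h4'⟩, h5⟩, h6⟩, h7⟩, h8, h8'⟩, h9⟩, h10⟩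
    exact ⟨h1, fun i => (h2 i).1, fun i => (h2 i).2, fun i => (h3 i).1, fun i => (h3 i).2, h4,
      fun i hi j hj hij => (h4' i hi j hj hij).1, fun i hi j hj hij => (h4' i hi j hj hij).2,
      fun k hk j hj hkj => (h5 k hk j hj hkj).1, fun k hk j hj hkj => (h5 k hk j hj hkj).2,
      fun j => (h6 j).1, fun j => (h6 j).2.1, fun j => (h6 j).2.2.1, fun j => (h6 j).2.2.2.1,
      fun j => (h6 j).2.2.2.2, h7, h8, h8', fun j => (h9 j).1, fun j => (h9 j).2, h10⟩
  · intro h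
    exact ⟨⟨⟨⟨⟨⟨⟨⟨⟨⟨h.root, fun i => ⟨h.var_pos i, h.var_neg i⟩⟩,
      fun i => ⟨h.branch_pos i, h.branch_neg i⟩⟩, h.level_succ⟩,
      fun i hi j hj hij => ⟨h.level_ex i hi j hj hij, h.level_all i hi j hj hij⟩⟩,
      fun k hk j hj hkj => ⟨h.keep_pos k hk j hj hkj, h.keep_neg k hk j hj hkj⟩⟩,
      fun j => ⟨h.clause_P1 j, h.clause_P1_keep j, h.clause_P2 j, h.clause_P2_keep j,
        h.clause_neg j⟩⟩, h.clause_neg_f⟩, h.f_ex, h.f'_all⟩,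
      fun j => ⟨h.clause_pos_eq j, h.clause_neg_eq j⟩⟩, h.root_chain⟩

def Encodes {Δ : Type} (I : DLInterp Δ) (σ : ℕ → Bool) (i : ℕ) (x : Δ) : Prop :=
  ∀ k < i, σ k = true ↔ x ∈ I.atom (xpA k)

namespace IsTphiModel

variable {Δ : Type} {I : DLInterp Δ} {n m : ℕ} {Q : Fin n → Bool}
  {Cl : Fin m → (Fin n × Bool) × (Fin n × Bool) × (Fin n × Bool)}

theorem mem_xm_iff (h : IsTphiModel I Q Cl) {k : ℕ} (hk : k < n) (x : Δ) :
    x ∈ I.atom (xmA k) ↔ x ∉ I.atom (xpA k) := by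
  have hpos := Set.ext_iff.1 (h.var_pos ⟨k, hk⟩) x
  have hneg := Set.ext_iff.1 (h.var_neg ⟨k, hk⟩) x
  simp only [sem_atom, mem_sem_ex, mem_sem_ctop, and_true, mem_sem_all,
    notMem_sem_cbot, imp_false] at hpos hneg
  rw [hpos, hneg, not_exists]

theorem mem_til_iff (h : IsTphiModel I Q Cl) {σ : ℕ → Bool} {x : Δ} (hx : Encodes I σ n x)
    (l : Fin n × Bool) : x ∈ (til l).sem I ↔ litEval σ l = false := by
  obtain ⟨k, _ | _⟩ := l
  · simp [til, litEval, hx k k.isLt]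
  · simp [til, litEval, h.mem_xm_iff k.isLt, ← hx k k.isLt]

/-- Chasing a falsified clause through (6)–(8) yields an `F`-successor, which `f'` forbids. -/
theorem notMem_f' (h : IsTphiModel I Q Cl) (j : Fin m) {x : Δ} (h1 : x ∈ (til (Cl j).1).sem I)
    (h2 : x ∈ (til (Cl j).2.1).sem I) (h3 : x ∈ (til (Cl j).2.2).sem I) : x ∉ I.atom fA' := by
  intro hf'
  obtain ⟨y, hxy, -⟩ := h.clause_P1 j h1
  obtain ⟨z, hxz, -⟩ := h.clause_P2 j ⟨y, hxy, h.clause_P1_keep j h2 y hxy⟩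
  have hf := h.clause_neg_f j (h.clause_neg j ⟨z, hxz, h.clause_P2_keep j h3 z hxz⟩)
  obtain ⟨w, hxw, -⟩ := h.f_ex hf
  exact notMem_sem_cbot I w (h.f'_all hf' w hxw)

theorem matrixEval_of_mem_f' (h : IsTphiModel I Q Cl) {σ : ℕ → Bool} {x : Δ}
    (hx : Encodes I σ n x) (hf' : x ∈ I.atom fA') : matrixEval Cl σ := by
  intro j
  by_contra hj
  simp only [Bool.or_eq_true, not_or, Bool.not_eq_true] at hj
  obtain ⟨⟨h1, h2⟩, h3⟩ := hj
  simp only [← h.mem_til_iff hx] at h1 h2 h3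
  exact h.notMem_f' j h1 h2 h3 hf'

theorem exists_child (h : IsTphiModel I Q Cl) {i : ℕ} (hi : i < n) {x : Δ}
    (hx : x ∈ I.atom (dA i)) (b : Bool) :
    ∃ y, (x, y) ∈ I.role (rR i) ∧ decide (y ∈ I.atom (xpA i)) = b := by
  cases b
  · obtain ⟨y, hxy, hy⟩ := h.branch_neg ⟨i, hi⟩ hx
    exact ⟨y, hxy, by simpa using (h.mem_xm_iff hi y).1 hy⟩
  · obtain ⟨y, hxy, hy⟩ := h.branch_pos ⟨i, hi⟩ hx
    exact ⟨y, hxy, by simpa using hy⟩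

theorem encodes_child (h : IsTphiModel I Q Cl) {σ : ℕ → Bool} {i : ℕ} (hi : i < n) {x y : Δ}
    (hx : Encodes I σ i x) (hxy : (x, y) ∈ I.role (rR i)) :
    Encodes I (Function.update σ i (decide (y ∈ I.atom (xpA i)))) (i + 1) y := by
  intro k hk
  rcases Nat.lt_succ_iff_lt_or_eq.1 hk with hk | rfl
  · have hkn := hk.trans hi
    rw [Function.update_of_ne hk.ne, hx k hk]
    refine ⟨fun hxk => h.keep_pos k hkn i hi hk hxk y hxy, not_imp_not.1 fun hxk => ?_⟩
    rw [← h.mem_xm_iff hkn] at hxk ⊢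
    exact h.keep_neg k hkn i hi hk hxk y hxy
  · simp

theorem qbfEval_of_mem_chain (h : IsTphiModel I Q Cl) (qs : List Bool) {i : ℕ}
    (hlen : i + qs.length = n) {σ : ℕ → Bool} {x : Δ} (hd : x ∈ I.atom (dA i))
    (hc : x ∈ (quantChain (quantRoles qs i) (atom fA')).sem I) (hx : Encodes I σ i x) :
    qbfEval qs i (matrixEval Cl) σ := by
  induction qs generalizing i σ x with
  | nil =>
    obtain rfl : i = n := by simpa using hlen
    exact h.matrixEval_of_mem_f' hx hc
  | cons q qs ih =>
    have hi : i < n := by simp at hlen; omega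
    have hlen' : i + 1 + qs.length = n := by simp at hlen; omega
    have hd' := h.level_succ ⟨i, hi⟩ hd
    cases q
    · intro b
      obtain ⟨y, hxy, rfl⟩ := h.exists_child hi hd b
      exact ih hlen' (hd' y hxy) (hc y hxy) (h.encodes_child hi hx hxy)
    · obtain ⟨y, hxy, hy⟩ := hc
      exact ⟨_, ih hlen' (hd' y hxy) hy (h.encodes_child hi hx hxy)⟩

theorem qbf_holds (h : IsTphiModel I Q Cl) :
    qbfEval (List.ofFn Q) 0 (matrixEval Cl) (fun _ => false) := by
  obtain ⟨x⟩ := I.ne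
  obtain ⟨r, -, hr⟩ := h.root (mem_sem_ctop I x)
  have hc := h.root_chain hr
  rw [ofFn_eq_quantRoles] at hc
  exact h.qbfEval_of_mem_chain _ (by simp) hr hc (fun k hk => absurd hk k.not_lt_zero)

end IsTphiModel

def selfLoops {α : Type} (s : Set α) : Set (α × α) := {e | e.2 = e.1 ∧ e.1 ∈ s}

@[simp] theorem mem_selfLoops {α : Type} (s : Set α) (x y : α) :
    (x, y) ∈ selfLoops s ↔ y = x ∧ x ∈ s := Iff.rfl

/-- Clause `C_j` holds under `σ`; vacuously true for `j ≥ m`, where no clause is named. -/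
def clauseHolds {n m : ℕ} (Cl : Fin m → (Fin n × Bool) × (Fin n × Bool) × (Fin n × Bool))
    (σ : ℕ → Bool) (j : ℕ) : Prop :=
  ∀ h : j < m, (litEval σ (Cl ⟨j, h⟩).1 || litEval σ (Cl ⟨j, h⟩).2.1 ||
    litEval σ (Cl ⟨j, h⟩).2.2) = true

theorem clauseHolds_val {n m : ℕ} {Cl : Fin m → (Fin n × Bool) × (Fin n × Bool) × (Fin n × Bool)}
    (σ : ℕ → Bool) (j : Fin m) :
    clauseHolds Cl σ j ↔
      (litEval σ (Cl j).1 || litEval σ (Cl j).2.1 || litEval σ (Cl j).2.2) = true := by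
  simp [clauseHolds, j.isLt]

namespace CanonicalModel

abbrev State : Type := (ℕ → Bool) × ℕ

def root : State := (fun _ => false, 0)

variable {n m : ℕ} (Cl : Fin m → (Fin n × Bool) × (Fin n × Bool) × (Fin n × Bool))

/-- Decodes the concept names `dA i = 7 * i`, …, `cmA j = 7 * j + 4`, `fA = 5`, `fA' = 6`. -/
def atoms (a : ℕ) : Set State :=
  match a % 7 with
  | 0 => {p | p.2 = a / 7 ∧ ∀ k ≥ a / 7, p.1 k = false}
  | 1 => {p | p.1 (a / 7) = true}
  | 2 => {p | p.1 (a / 7) = false}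
  | 3 => {p | clauseHolds Cl p.1 (a / 7)}
  | 4 => {p | ¬ clauseHolds Cl p.1 (a / 7)}
  | 5 => {p | ¬ matrixEval Cl p.1}
  | _ => {p | matrixEval Cl p.1}

def roles (r : ℕ) : Set (State × State) :=
  match r % 8 with
  | 0 => {e | e.1.2 = r / 8 ∧ ∃ b, e.2 = (Function.update e.1.1 (r / 8) b, r / 8 + 1)}
  | 1 => selfLoops {p | p.1 (r / 8) = true}
  | 2 => selfLoops {p | p.2 = r / 8}
  | 3 => selfLoops {p | clauseHolds Cl p.1 (r / 8)}
  | 4 => selfLoops {p | ∃ h : r / 8 < m, litEval p.1 (Cl ⟨r / 8, h⟩).1 = false}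
  | 5 => selfLoops {p | ∃ h : r / 8 < m, litEval p.1 (Cl ⟨r / 8, h⟩).1 = false ∧
      litEval p.1 (Cl ⟨r / 8, h⟩).2.1 = false}
  | 6 => {e | e.2 = root}
  | _ => selfLoops {p | ¬ matrixEval Cl p.1}

/-- The element `(σ, i)` is the node at depth `i` of the tree of partial assignments; on the
tree itself, `σ k = false` for `k ≥ i`. -/
def model : DLInterp State := ⟨⟨root⟩, atoms Cl, roles Cl, fun _ => root⟩

section Simp

variable (i : ℕ)

@[simp] theorem atom_dA : (model Cl).atom (dA i) = {p | p.2 = i ∧ ∀ k ≥ i, p.1 k = false} := by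
  obtain ⟨h1, h2⟩ : dA i % 7 = 0 ∧ dA i / 7 = i := by unfold dA; omega
  simp only [model, atoms, h1, h2]

@[simp] theorem atom_xpA : (model Cl).atom (xpA i) = {p | p.1 i = true} := by
  obtain ⟨h1, h2⟩ : xpA i % 7 = 1 ∧ xpA i / 7 = i := by unfold xpA; omega
  simp only [model, atoms, h1, h2]

@[simp] theorem atom_xmA : (model Cl).atom (xmA i) = {p | p.1 i = false} := by
  obtain ⟨h1, h2⟩ : xmA i % 7 = 2 ∧ xmA i / 7 = i := by unfold xmA; omega
  simp only [model, atoms, h1, h2]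

@[simp] theorem atom_cpA : (model Cl).atom (cpA i) = {p | clauseHolds Cl p.1 i} := by
  obtain ⟨h1, h2⟩ : cpA i % 7 = 3 ∧ cpA i / 7 = i := by unfold cpA; omega
  simp only [model, atoms, h1, h2]

@[simp] theorem atom_cmA : (model Cl).atom (cmA i) = {p | ¬ clauseHolds Cl p.1 i} := by
  obtain ⟨h1, h2⟩ : cmA i % 7 = 4 ∧ cmA i / 7 = i := by unfold cmA; omega
  simp only [model, atoms, h1, h2]

@[simp] theorem atom_fA : (model Cl).atom fA = {p | ¬ matrixEval Cl p.1} := rfl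

@[simp] theorem atom_fA' : (model Cl).atom fA' = {p | matrixEval Cl p.1} := rfl

theorem mem_role_rR (p q : State) :
    (p, q) ∈ (model Cl).role (rR i) ↔ p.2 = i ∧ ∃ b, q = (Function.update p.1 i b, i + 1) := by
  obtain ⟨h1, h2⟩ : rR i % 8 = 0 ∧ rR i / 8 = i := by unfold rR; omega
  simp only [model, roles, h1, h2, Set.mem_ofPred_eq]

@[simp] theorem role_rX : (model Cl).role (rX i) = selfLoops {p | p.1 i = true} := by
  obtain ⟨h1, h2⟩ : rX i % 8 = 1 ∧ rX i / 8 = i := by unfold rX; omega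
  simp only [model, roles, h1, h2]

@[simp] theorem role_rD : (model Cl).role (rD i) = selfLoops {p | p.2 = i} := by
  obtain ⟨h1, h2⟩ : rD i % 8 = 2 ∧ rD i / 8 = i := by unfold rD; omega
  simp only [model, roles, h1, h2]

@[simp] theorem role_rC : (model Cl).role (rC i) = selfLoops {p | clauseHolds Cl p.1 i} := by
  obtain ⟨h1, h2⟩ : rC i % 8 = 3 ∧ rC i / 8 = i := by unfold rC; omega
  simp only [model, roles, h1, h2]

@[simp] theorem role_rP1 (j : Fin m) :
    (model Cl).role (rP1 j) = selfLoops {p | litEval p.1 (Cl j).1 = false} := by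
  obtain ⟨h1, h2⟩ : rP1 j % 8 = 4 ∧ rP1 j / 8 = j := by unfold rP1; omega
  simp only [model, roles, h1, h2, j.isLt, exists_true_left]

@[simp] theorem role_rP2 (j : Fin m) :
    (model Cl).role (rP2 j) =
      selfLoops {p | litEval p.1 (Cl j).1 = false ∧ litEval p.1 (Cl j).2.1 = false} := by
  obtain ⟨h1, h2⟩ : rP2 j % 8 = 5 ∧ rP2 j / 8 = j := by unfold rP2; omega
  simp only [model, roles, h1, h2, j.isLt, exists_true_left]

@[simp] theorem role_rF : (model Cl).role rF = selfLoops {p | ¬ matrixEval Cl p.1} := rfl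

end Simp

variable {Cl}

@[simp] theorem mem_til (l : Fin n × Bool) (p : State) :
    p ∈ (til l).sem (model Cl) ↔ litEval p.1 l = false := by
  obtain ⟨k, _ | _⟩ := l <;> simp [til, litEval]

theorem mem_chain_of_qbfEval (qs : List Bool) {i : ℕ} {σ : ℕ → Bool}
    (hq : qbfEval qs i (matrixEval Cl) σ) :
    (σ, i) ∈ (quantChain (quantRoles qs i) (atom fA')).sem (model Cl) := by
  induction qs generalizing i σ with
  | nil => exact hq
  | cons q qs ih =>
    cases q
    · intro y hy
      obtain ⟨-, b, rfl⟩ := (mem_role_rR Cl i _ y).1 hy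
      exact ih (hq b)
    · obtain ⟨b, hb⟩ := hq
      exact ⟨_, (mem_role_rR Cl i _ _).2 ⟨rfl, b, rfl⟩, ih hb⟩

theorem isTphiModel (Q : Fin n → Bool)
    (hq : qbfEval (List.ofFn Q) 0 (matrixEval Cl) (fun _ => false)) :
    IsTphiModel (model Cl) Q Cl where
  root _ _ := ⟨root, rfl, by simp [root]⟩
  var_pos i := by ext; simp
  var_neg i := by ext; simp
  branch_pos i p hp := by
    rw [sem_atom, atom_dA] at hp
    exact ⟨_, (mem_role_rR Cl i _ _).2 ⟨hp.1, true, rfl⟩, by simp⟩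
  branch_neg i p hp := by
    rw [sem_atom, atom_dA] at hp
    exact ⟨_, (mem_role_rR Cl i _ _).2 ⟨hp.1, false, rfl⟩, by simp⟩
  level_succ i p hp q hpq := by
    rw [sem_atom, atom_dA] at hp
    obtain ⟨-, b, rfl⟩ := (mem_role_rR Cl i _ _).1 hpq
    simp only [sem_atom, atom_dA, Set.mem_ofPred_eq, true_and]
    intro k hk
    rw [Function.update_of_ne (by omega)]
    exact hp.2 k (by omega)
  level_ex i _ j _ _ := by simp [satGCI, Set.subset_def]
  level_all i _ j _ hij := by simp [satGCI, Set.subset_def, hij.ne']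
  keep_pos k _ j _ hkj p hp q hpq := by
    obtain ⟨-, b, rfl⟩ := (mem_role_rR Cl j _ _).1 hpq
    simpa [Function.update_of_ne hkj.ne] using hp
  keep_neg k _ j _ hkj p hp q hpq := by
    obtain ⟨-, b, rfl⟩ := (mem_role_rR Cl j _ _).1 hpq
    simpa [Function.update_of_ne hkj.ne] using hp
  clause_P1 j := by simp [satGCI, Set.subset_def]
  clause_P1_keep j := by simp +contextual [satGCI, Set.subset_def]
  clause_P2 j := by simp +contextual [satGCI, Set.subset_def]
  clause_P2_keep j := by simp +contextual [satGCI, Set.subset_def]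
  clause_neg j := by simp +contextual [satGCI, Set.subset_def, clauseHolds_val]
  clause_neg_f j p hp hm := by
    rw [sem_atom, atom_cmA] at hp
    exact hp fun h => hm ⟨j, h⟩
  f_ex := by simp [satGCI, Set.subset_def]
  f'_all := by simp [satGCI, Set.subset_def]
  clause_pos_eq j := by ext; simp
  clause_neg_eq j := by ext; simp
  root_chain := by
    rintro ⟨σ, i⟩ hσ
    rw [sem_atom, atom_dA] at hσ
    obtain ⟨rfl, hσ⟩ := hσ
    obtain rfl : σ = fun _ => false := funext fun k => hσ k k.zero_le
    rw [ofFn_eq_quantRoles]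
    exact mem_chain_of_qbfEval _ hq

end CanonicalModel

/-- the closed QBF `φ = Q_1 x_1 ⋯ Q_n x_n (C_1 ∧ ⋯ ∧ C_m)` (in 3-CNF)
evaluates to true iff the TBox `T_φ` (whose concepts use only the Boolean operators
`⊤` and `⊥`) is satisfiable. -/
theorem stmt_15 (n m : ℕ) (Q : Fin n → Bool)
    (Cl : Fin m → (Fin n × Bool) × (Fin n × Bool) × (Fin n × Bool)) :
    qbfEval (List.ofFn Q) 0 (matrixEval Cl) (fun _ => false) ↔ TBoxSat (Tphi n m Q Cl) := by
  constructor
  · intro hq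
    exact ⟨_, CanonicalModel.model Cl,
      (satTBox_Tphi_iff _ Q Cl).2 (CanonicalModel.isTphiModel Q hq)⟩
  · rintro ⟨Δ, I, hI⟩
    exact ((satTBox_Tphi_iff I Q Cl).1 hI).qbf_holds
end
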